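/- arXiv:2403.19485 — 2 statements merged into one kernel-verified Lean document; each statement's English description precedes it below -/
import Mathlib

section
/- Let A and B be sesquilinear forms on a complex vector space H, with (λ, u, ũ) satisfying A(u,w) = λB(u,w) for all w ∈ H, A(ṽ,ũ) = λB(ṽ,ũ) for all ṽ ∈ H, and B(u,ũ) = 1; and let (λ_h, u_h, ũ_h) ∈ ℂ × H_h × H_h (H_h ⊆ H a subspace) satisfy A(u_h,w) = λ_h B(u_h,w) for all w ∈ H_h, A(ṽ,ũ_h) = λ_h B(ṽ,ũ_h) for all ṽ ∈ H_h, and B(u_h,ũ_h) = 1. Define residuals ρ(ṽ) = A(u_h,ṽ) − λ_h B(u_h,ṽ) and ρ̃(v) = A(v,ũ_h) − λ_h B(v,ũ_h), and σ = B(u − u_h, ũ − ũ_h)/2. Then for every v_h, ṽ_h ∈ H_h, (λ − λ_h)(1 − σ) = ½ρ(ũ − ṽ_h) + ½ρ̃(u − v_h). -/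
/-! The discrete residuals vanish on `H_h`, so `ρ(ũ − ṽ_h) = ρ(ũ) = (λ − λ_h) B(u_h, ũ)` and
`ρ̃(u − v_h) = ρ̃(u) = (λ − λ_h) B(u, ũ_h)`. On the other hand, the normalizations
`B(u, ũ) = B(u_h, ũ_h) = 1` give `1 − σ = (B(u_h, ũ) + B(u, ũ_h)) / 2`. -/

theorem stmt_6_general {H : Type*} [AddCommGroup H] [Module ℂ H]
    (A B : H →ₗ[ℂ] H →ₗ⋆[ℂ] ℂ) (Hh : Submodule ℂ H)
    (lam lamh : ℂ) (u ut uh uth : H)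
    (h1 : ∀ w : H, A u w = lam * B u w)
    (h2 : ∀ vt : H, A vt ut = lam * B vt ut)
    (h3 : B u ut = 1)
    (h4 : ∀ w ∈ Hh, A uh w = lamh * B uh w)
    (h5 : ∀ vt ∈ Hh, A vt uth = lamh * B vt uth)
    (h6 : B uh uth = 1) :
    ∀ vh ∈ Hh, ∀ vth ∈ Hh,
      (lam - lamh) * (1 - B (u - uh) (ut - uth) / 2)
        = (A uh (ut - vth) - lamh * B uh (ut - vth)) / 2
          + (A (u - vh) uth - lamh * B (u - vh) uth) / 2 := by
  intro vh hvh vth hvth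
  have primal_residual :
      A uh (ut - vth) - lamh * B uh (ut - vth) = (lam - lamh) * B uh ut := by
    simp only [map_sub]
    linear_combination h2 uh - h4 vth hvth
  have dual_residual :
      A (u - vh) uth - lamh * B (u - vh) uth = (lam - lamh) * B u uth := by
    simp only [map_sub, LinearMap.sub_apply]
    linear_combination h1 uth - h5 vh hvh
  have one_sub_sigma :
      1 - B (u - uh) (ut - uth) / 2 = (B uh ut + B u uth) / 2 := by
    simp only [map_sub, LinearMap.sub_apply]
    linear_combination -(h3 + h6) / 2
  rw [primal_residual, dual_residual, one_sub_sigma]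
  ring

/-- The dual-weighted-residual identity: with exact eigentriple `(lam, u, ut)` and
discrete eigentriple `(lamh, uh, uth)` (`ut`, `uth` are the left eigenfunctions),
`(λ − λ_h)(1 − σ) = ½ρ(ũ − ṽ_h) + ½ρ̃(u − v_h)` for all `v_h, ṽ_h ∈ H_h`,
where `σ = B(u − u_h, ũ − ũ_h)/2`. -/
theorem stmt_6 {H : Type*} [AddCommGroup H] [Module ℂ H]
    (A B : H →ₗ[ℂ] H →ₗ⋆[ℂ] ℂ) (Hh : Submodule ℂ H)
    (lam lamh : ℂ) (u ut uh uth : H)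
    (huh : uh ∈ Hh) (huth : uth ∈ Hh)
    (h1 : ∀ w : H, A u w = lam * B u w)
    (h2 : ∀ vt : H, A vt ut = lam * B vt ut)
    (h3 : B u ut = 1)
    (h4 : ∀ w ∈ Hh, A uh w = lamh * B uh w)
    (h5 : ∀ vt ∈ Hh, A vt uth = lamh * B vt uth)
    (h6 : B uh uth = 1) :
    ∀ vh ∈ Hh, ∀ vth ∈ Hh,
      (lam - lamh) * (1 - B (u - uh) (ut - uth) / 2)
        = (A uh (ut - vth) - lamh * B uh (ut - vth)) / 2
          + (A (u - vh) uth - lamh * B (u - vh) uth) / 2 :=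
  stmt_6_general A B Hh lam lamh u ut uh uth h1 h2 h3 h4 h5 h6
end

section
/- For the PML coefficient matrix γ = ζη'·J⁻ᵀJ⁻¹ with J = (ζ'/r)xxᵀ + ζI and J⁻¹ = (1/η')I + (ζ'/(ηη'))x⊥x⊥ᵀ, γ is a symmetric 2×2 complex matrix with eigenvectors x and x⊥, namely γ x = (η(r)/(r η'(r))) x and γ x⊥ = (r η'(r)/η(r)) x⊥, so det γ = 1. -/
open Matrix

lemma inv_mulVec_of_eig {J : Matrix (Fin 2) (Fin 2) ℂ} (hJ : IsUnit J.det)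
    {v : Fin 2 → ℂ} {c : ℂ} (hc : c ≠ 0) (h : J.mulVec v = c • v) :
    J⁻¹.mulVec v = c⁻¹ • v := by
  have h1 : J⁻¹.mulVec (J.mulVec v) = v := by
    rw [Matrix.mulVec_mulVec, Matrix.nonsing_inv_mul _ hJ, Matrix.one_mulVec]
  rw [h, Matrix.mulVec_smul] at h1
  have h2 : c⁻¹ • (c • J⁻¹.mulVec v) = c⁻¹ • v := congrArg (c⁻¹ • ·) h1
  rw [smul_smul, inv_mul_cancel₀ hc, one_smul] at h2
  exact h2

/-- The PML coefficient matrix `γ = ζη'·J⁻ᵀJ⁻¹` is symmetric, has eigenvectors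
`x` and `x⊥` with `γ x = (η/(r η')) x`, `γ x⊥ = (r η'/η) x⊥`, and `det γ = 1`. -/
theorem stmt_11 (x : Fin 2 → ℝ) (r : ℝ) (hr : 0 < r)
    (hx : x 0 ^ 2 + x 1 ^ 2 = r ^ 2)
    (ζr ζ'r ηr η'r : ℂ)
    (hηdef : ηr = (r : ℂ) * ζr) (hη'def : η'r = ζr + (r : ℂ) * ζ'r)
    (hηnz : ηr ≠ 0) (hη'nz : η'r ≠ 0)
    (J : Matrix (Fin 2) (Fin 2) ℂ)
    (hJ : ∀ i j, J i j = (ζ'r / (r : ℂ)) * (x i : ℂ) * (x j : ℂ)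
      + ζr * (if i = j then 1 else 0))
    (γ : Matrix (Fin 2) (Fin 2) ℂ)
    (hγ : γ = (ζr * η'r) • ((J⁻¹)ᵀ * J⁻¹))
    (xc xperp : Fin 2 → ℂ)
    (hxc : xc = fun i => (x i : ℂ))
    (hxp : xperp = ![(x 1 : ℂ), -(x 0 : ℂ)]) :
    γᵀ = γ ∧ γ.mulVec xc = (ηr / ((r : ℂ) * η'r)) • xc ∧
      γ.mulVec xperp = ((r : ℂ) * η'r / ηr) • xperp ∧ γ.det = 1 := by
  have hrc : (r : ℂ) ≠ 0 := by
    exact_mod_cast (ne_of_gt hr)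
  have hζ : ζr ≠ 0 := by
    intro h; apply hηnz; rw [hηdef, h, mul_zero]
  have hxc2 : (x 0 : ℂ) ^ 2 + (x 1 : ℂ) ^ 2 = (r : ℂ) ^ 2 := by
    exact_mod_cast congrArg (Complex.ofReal) hx
  -- J is symmetric
  have hsym : Jᵀ = J := by
    ext i j
    fin_cases i <;> fin_cases j <;> simp [hJ, Matrix.transpose_apply] <;> ring
  -- det J = ζ η'
  have hdetJ : J.det = ζr * η'r := by
    rw [Matrix.det_fin_two, hJ, hJ, hJ, hJ]
    simp only [if_pos rfl, if_neg (by decide : (0 : Fin 2) ≠ 1),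
      if_neg (by decide : (1 : Fin 2) ≠ 0)]
    rw [hη'def]
    field_simp
    simp only [if_true]
    linear_combination (ζr * ζ'r * (r : ℂ)) * hxc2
  have hdetJ' : J.det ≠ 0 := by rw [hdetJ]; exact mul_ne_zero hζ hη'nz
  have hU : IsUnit J.det := isUnit_iff_ne_zero.mpr hdetJ'
  -- eigenvectors of J
  have hJx : J.mulVec xc = η'r • xc := by
    ext i
    fin_cases i <;>
      · simp [Matrix.mulVec, dotProduct, Fin.sum_univ_two, hJ, hxc, hη'def]
        field_simp
        first
          | linear_combination (ζ'r * (x 0 : ℂ)) * hxc2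
          | linear_combination (ζ'r * (x 1 : ℂ)) * hxc2
  have hJxp : J.mulVec xperp = ζr • xperp := by
    ext i
    fin_cases i <;>
      · simp [Matrix.mulVec, dotProduct, Fin.sum_univ_two, hJ, hxp]
        ring
  have hIx : J⁻¹.mulVec xc = η'r⁻¹ • xc := inv_mulVec_of_eig hU hη'nz hJx
  have hIxp : J⁻¹.mulVec xperp = ζr⁻¹ • xperp := inv_mulVec_of_eig hU hζ hJxp
  have hTinv : (J⁻¹)ᵀ = J⁻¹ := by rw [Matrix.transpose_nonsing_inv, hsym]
  refine ⟨?_, ?_, ?_, ?_⟩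
  · rw [hγ, Matrix.transpose_smul, Matrix.transpose_mul, Matrix.transpose_transpose, hTinv]
  · rw [hγ, Matrix.smul_mulVec, ← Matrix.mulVec_mulVec, hTinv, hIx,
      Matrix.mulVec_smul, hIx, smul_smul, smul_smul]
    congr 1
    rw [hηdef]
    field_simp
  · rw [hγ, Matrix.smul_mulVec, ← Matrix.mulVec_mulVec, hTinv, hIxp,
      Matrix.mulVec_smul, hIxp, smul_smul, smul_smul]
    congr 1
    rw [hηdef]
    field_simp
  · rw [hγ, Matrix.det_smul, Fintype.card_fin, Matrix.det_mul, hTinv, Matrix.det_nonsing_inv,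
      Ring.inverse_eq_inv, hdetJ]
    field_simp
end
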